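/- arXiv:2602.07203 — 2 statements merged into one kernel-verified Lean document; each statement's English description precedes it below -/
import Mathlib

section
/- For every S ⊆ {1,…,d}: ⌊⌊S⌋⌋ = ⌊S⌋ (the basis of any set is irreducible), ⌈⌈S⌉⌉ = ⌈S⌉ (the closure of any set is closed), ⌈⌊S⌋⌉ = ⌈S⌉, and ⌊⌈S⌉⌋ = ⌊S⌋. -/
/-- Vertex type: `some i` is the feature vertex `i`, `none` is the target vertex `Y`. -/
abbrev Vtx (d : ℕ) := Option (Fin d)

/-- `PathTo E j p` means `p` is a directed path in the graph with edge relation `E`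
from the feature vertex `j` to the target vertex `Y` (encoded as `none`). -/
def PathTo {d : ℕ} (E : Vtx d → Vtx d → Prop) (j : Fin d) (p : List (Vtx d)) : Prop :=
  p.Chain' E ∧ p.head? = some (some j) ∧ p.getLast? = some none

open Classical in
/-- The basis `⌊S⌋` of `S`: all `j ∈ S` having a directed path to `Y`
whose only vertex in `S` is `j`. -/
noncomputable def bas {d : ℕ} (E : Vtx d → Vtx d → Prop) (S : Finset (Fin d)) :
    Finset (Fin d) :=
  S.filter fun j => ∃ p : List (Vtx d), PathTo E j p ∧ ∀ i ∈ S, some i ∈ p → i = j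

open Classical in
/-- The closure `⌈S⌉` of `S`: all `j ∈ {1,…,d}` such that every directed path
from `j` to `Y` contains a vertex of `S`. -/
noncomputable def clos {d : ℕ} (E : Vtx d → Vtx d → Prop) (S : Finset (Fin d)) :
    Finset (Fin d) :=
  Finset.univ.filter fun j => ∀ p : List (Vtx d), PathTo E j p → ∃ i ∈ S, some i ∈ p

section Aux

variable {d : ℕ} {E : Vtx d → Vtx d → Prop} {S T : Finset (Fin d)}

open Classical

lemma mem_bas_iff {j : Fin d} :
    j ∈ bas E S ↔ j ∈ S ∧ ∃ p : List (Vtx d), PathTo E j p ∧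
      ∀ i ∈ S, some i ∈ p → i = j := by
  simp [bas]

lemma mem_clos_iff {j : Fin d} :
    j ∈ clos E S ↔ ∀ p : List (Vtx d), PathTo E j p → ∃ i ∈ S, some i ∈ p := by
  simp [clos]

lemma head_mem_path {j : Fin d} {p : List (Vtx d)} (h : PathTo E j p) :
    some j ∈ p :=
  List.mem_of_mem_head? (by rw [h.2.1]; exact rfl)

lemma suffix_path' {i : Fin d} {p : List (Vtx d)} (hc : p.Chain' E)
    (hl : p.getLast? = some none) (hi : some i ∈ p) :
    ∃ l₁ l₂, p = l₁ ++ some i :: l₂ ∧ PathTo E i (some i :: l₂) := by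
  obtain ⟨l₁, l₂, rfl⟩ := List.append_of_mem hi
  refine ⟨l₁, l₂, rfl, hc.suffix ⟨l₁, rfl⟩, rfl, ?_⟩
  rw [← hl, List.getLast?_append_of_ne_nil _ (List.cons_ne_nil _ _)]

lemma suffix_path {j i : Fin d} {p : List (Vtx d)} (h : PathTo E j p)
    (hi : some i ∈ p) :
    ∃ l₁ l₂, p = l₁ ++ some i :: l₂ ∧ PathTo E i (some i :: l₂) :=
  suffix_path' h.1 h.2.2 hi

lemma bas_subset : bas E S ⊆ S := Finset.filter_subset _ _

lemma subset_clos : S ⊆ clos E S := by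
  intro i hi
  rw [mem_clos_iff]
  exact fun p hp => ⟨i, hi, head_mem_path hp⟩

lemma clos_mono (h : S ⊆ T) : clos E S ⊆ clos E T := by
  intro j hj
  rw [mem_clos_iff] at hj ⊢
  intro p hp
  obtain ⟨i, hiS, hip⟩ := hj p hp
  exact ⟨i, h hiS, hip⟩

/-- If a path contains a vertex of `S`, it contains a vertex of `bas E S`. -/
lemma hits_bas : ∀ n (p : List (Vtx d)), p.length ≤ n → ∀ j : Fin d,
    PathTo E j p → (∃ i ∈ S, some i ∈ p) → ∃ i ∈ bas E S, some i ∈ p := by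
  intro n
  induction n with
  | zero =>
    intro p hlen j hp _
    have : p = [] := List.eq_nil_of_length_eq_zero (Nat.le_zero.mp hlen)
    simp [this, PathTo] at hp
  | succ n ih =>
    intro p hlen j hp ⟨i, hiS, hip⟩
    obtain ⟨l₁, l₂, hpe, hq⟩ := suffix_path hp hip
    by_cases hall : ∀ i' ∈ S, some i' ∈ (some i :: l₂) → i' = i
    · exact ⟨i, mem_bas_iff.mpr ⟨hiS, _, hq, hall⟩, hip⟩
    · push_neg at hall
      obtain ⟨i', hi'S, hi'mem, hne⟩ := hall
      have hi'l₂ : some i' ∈ l₂ := by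
        rcases List.mem_cons.mp hi'mem with h | h
        · exact absurd (Option.some.inj h) hne
        · exact h
      have hl₂ne : l₂ ≠ [] := List.ne_nil_of_mem hi'l₂
      have hl₂c : l₂.Chain' E := hq.1.suffix ⟨[some i], rfl⟩
      have hl₂l : l₂.getLast? = some none := by
        have := hq.2.2
        rwa [show some i :: l₂ = [some i] ++ l₂ from rfl,
          List.getLast?_append_of_ne_nil _ hl₂ne] at this
      obtain ⟨m₁, m₂, hl₂e, hr⟩ := suffix_path' hl₂c hl₂l hi'l₂
      have hlen' : (some i' :: m₂).length ≤ n := by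
        have h1 : (some i' :: m₂).length ≤ l₂.length := by
          rw [hl₂e]; simp
        have h2 : l₂.length < p.length := by
          rw [hpe]; simp; omega
        omega
      obtain ⟨k, hk, hkmem⟩ := ih _ hlen' i' hr ⟨i', hi'S, List.mem_cons_self⟩
      refine ⟨k, hk, ?_⟩
      rw [hpe, hl₂e]
      rcases List.mem_cons.mp hkmem with h | h
      · rw [h]; simp
      · simp [h]

lemma chain_transGen {α : Type*} {R : α → α → Prop} :
    ∀ {t : List α} {a b : α}, List.Chain R a t → b ∈ t → Relation.TransGen R a b := by
  intro t
  induction t with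
  | nil => intro a b _ hb; simp at hb
  | cons c t' ih =>
    intro a b hch hb
    rw [List.Chain, List.chain_cons] at hch
    rcases List.mem_cons.mp hb with h | h
    · subst h; exact Relation.TransGen.single hch.1
    · exact Relation.TransGen.head hch.1 (ih hch.2 h)

end Aux

/-- Idempotence and interchange laws for basis and closure. -/
theorem stmt4 (d : ℕ) (E : Vtx d → Vtx d → Prop)
    (hacyc : ∀ v : Vtx d, ¬ Relation.TransGen E v v)
    (hY : ∀ v : Vtx d, ¬ E none v)
    (S : Finset (Fin d)) :
    bas E (bas E S) = bas E S ∧ clos E (clos E S) = clos E S ∧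
    clos E (bas E S) = clos E S ∧ bas E (clos E S) = bas E S := by
  refine ⟨?_, ?_, ?_, ?_⟩
  · -- bas (bas S) = bas S
    apply Finset.Subset.antisymm bas_subset
    intro j hj
    obtain ⟨hjS, p, hp, hprop⟩ := mem_bas_iff.mp hj
    exact mem_bas_iff.mpr ⟨hj, p, hp, fun i hi hip => hprop i (bas_subset hi) hip⟩
  · -- clos (clos S) = clos S
    apply Finset.Subset.antisymm _ subset_clos
    intro j hj
    rw [mem_clos_iff] at hj ⊢
    intro p hp
    obtain ⟨i, hic, hip⟩ := hj p hp
    obtain ⟨l₁, l₂, hpe, hq⟩ := suffix_path hp hip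
    obtain ⟨i', hi'S, hi'mem⟩ := mem_clos_iff.mp hic _ hq
    exact ⟨i', hi'S, by rw [hpe]; exact List.mem_append_right _ hi'mem⟩
  · -- clos (bas S) = clos S
    apply Finset.Subset.antisymm (clos_mono bas_subset)
    intro j hj
    rw [mem_clos_iff] at hj ⊢
    intro p hp
    exact hits_bas p.length p le_rfl j hp (hj p hp)
  · -- bas (clos S) = bas S
    apply Finset.Subset.antisymm
    · intro j hj
      obtain ⟨hjc, p, hp, hprop⟩ := mem_bas_iff.mp hj
      obtain ⟨i, hiS, hip⟩ := mem_clos_iff.mp hjc p hp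
      have hij : i = j := hprop i (subset_clos hiS) hip
      subst hij
      exact mem_bas_iff.mpr ⟨hiS, p, hp, fun i' hi' hip' => hprop i' (subset_clos hi') hip'⟩
    · intro j hj
      obtain ⟨hjS, p, hp, hprop⟩ := mem_bas_iff.mp hj
      refine mem_bas_iff.mpr ⟨subset_clos hjS, p, hp, ?_⟩
      intro i hic hip
      by_contra hne
      obtain ⟨l₁, l₂, hpe, hq⟩ := suffix_path hp hip
      obtain ⟨i', hi'S, hi'mem⟩ := mem_clos_iff.mp hic _ hq
      have hi'j : i' = j := hprop i' hi'S (by rw [hpe]; exact List.mem_append_right _ hi'mem)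
      rw [hi'j] at hi'mem
      -- so `some j ∈ some i :: l₂` with `i ≠ j`, hence `some j ∈ l₂`
      have hjl₂ : some j ∈ l₂ := by
        rcases List.mem_cons.mp hi'mem with h | h
        · exact absurd (Option.some.inj h).symm hne
        · exact h
      -- p starts with `some j`; get a cycle
      obtain ⟨t, hpt⟩ : ∃ t, p = some j :: t := by
        cases p with
        | nil => simp [PathTo] at hp
        | cons a t =>
          have : a = some j := by
            have := hp.2.1
            simpa using this
          exact ⟨t, by rw [this]⟩
      have hjt : some j ∈ t := by
        cases l₁ with
        | nil =>
          exfalso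
          rw [hpe] at hpt
          simp at hpt
          exact hne hpt.1
        | cons a l₁' =>
          rw [hpe] at hpt
          simp at hpt
          rw [← hpt.2]
          exact List.mem_append_right _ (List.mem_cons_of_mem _ hjl₂)
      have hch : List.Chain E (some j) t := by
        have := hp.1
        rw [hpt] at this
        exact this
      exact hacyc (some j) (chain_transGen hch hjt)
end

section
/- Let q_0, …, q_{d−1} be arbitrary real weights and suppose the value function ν : P({1,…,d}) → ℝ satisfies ν(T) = ν(⌊T⌋) for every T ⊆ {1,…,d}. Then for every i ∈ {1,…,d}, the semivalue φ^q_i = Σ_{S ⊆ {1,…,d} ∖ {i}} q_{|S|} · ( ν(S ∪ {i}) − ν(S) ) satisfies φ^q_i = Σ_{U irreducible} ν(U) · w^q_i(U), where the sum is over all irreducible subsets U ⊆ {1,…,d} and w^q_i(U) = Σ_{T : U ⊆ T ⊆ ⌈U⌉} ( 1[i ∈ T] · q_{|T|−1} − 1[i ∉ T] · q_{|T|} ). -/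
open Finset

theorem List.relationTransGen_of_isChain_cons_of_mem {α : Type*} {r : α → α → Prop}
    {a b : α} {l : List α} (hl : (a :: l).IsChain r) (hb : b ∈ l) : Relation.TransGen r a b :=
  List.rel_of_pairwise_cons
    (List.isChain_iff_pairwise.1 (hl.imp fun _ _ => Relation.TransGen.single)) hb

section Graph

variable {d : ℕ} {E : Vtx d → Vtx d → Prop}

theorem PathTo.head_mem {j : Fin d} {p : List (Vtx d)} (hp : PathTo E j p) : some j ∈ p :=
  List.mem_of_mem_head? hp.2.1

theorem exists_pathTo_suffix (T : Finset (Fin d)) {p : List (Vtx d)} (hc : p.IsChain E)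
    (hl : p.getLast? = some none) (hT : ∃ k ∈ T, some k ∈ p) :
    ∃ m ∈ T, ∃ s, s <:+ p ∧ PathTo E m s ∧ ∀ n ∈ T, some n ∈ s → n = m := by
  induction p with
  | nil => simp at hT
  | cons v rest ih =>
    by_cases hrest : ∃ k ∈ T, some k ∈ rest
    · obtain ⟨w, r, rfl⟩ := List.exists_cons_of_ne_nil (l := rest) (by rintro rfl; simp at hrest)
      obtain ⟨m, hm, s, hs, hpath, honly⟩ := ih hc.tail (by simpa using hl) hrest
      exact ⟨m, hm, s, hs.trans (List.suffix_cons v _), hpath, honly⟩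
    · obtain ⟨k, hk, hkp⟩ := hT
      obtain rfl : v = some k := by grind
      refine ⟨k, hk, _, List.suffix_refl _, ⟨hc, rfl, hl⟩, fun n hn hnp => ?_⟩
      grind

theorem mem_bas {S : Finset (Fin d)} {j : Fin d} :
    j ∈ bas E S ↔ j ∈ S ∧ ∃ p, PathTo E j p ∧ ∀ i ∈ S, some i ∈ p → i = j := by
  simp [bas]

theorem bas_subset_s14 (E : Vtx d → Vtx d → Prop) (S : Finset (Fin d)) : bas E S ⊆ S :=
  fun _ hj => (mem_bas.1 hj).1

theorem mem_clos {S : Finset (Fin d)} {j : Fin d} :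
    j ∈ clos E S ↔ ∀ p, PathTo E j p → ∃ i ∈ S, some i ∈ p := by
  simp [clos]

theorem bas_bas (E : Vtx d → Vtx d → Prop) (S : Finset (Fin d)) : bas E (bas E S) = bas E S := by
  refine (bas_subset_s14 E _).antisymm fun j hj => ?_
  obtain ⟨-, p, hp, honly⟩ := mem_bas.1 hj
  exact mem_bas.2 ⟨hj, p, hp, fun i hi => honly i (bas_subset_s14 E S hi)⟩

theorem subset_clos_bas (E : Vtx d → Vtx d → Prop) (S : Finset (Fin d)) :
    S ⊆ clos E (bas E S) := by
  refine fun j hj => mem_clos.2 fun p hp => ?_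
  obtain ⟨m, hm, s, hs, hpath, honly⟩ := exists_pathTo_suffix S hp.1 hp.2.2 ⟨j, hj, hp.head_mem⟩
  exact ⟨m, mem_bas.2 ⟨hm, s, hpath, honly⟩, hs.subset hpath.head_mem⟩

theorem bas_eq_of_subset_of_subset_clos (hacyc : ∀ v : Vtx d, ¬ Relation.TransGen E v v)
    {U T : Finset (Fin d)} (hU : bas E U = U) (hUT : U ⊆ T) (hTU : T ⊆ clos E U) :
    bas E T = U := by
  ext j
  refine ⟨fun hj => ?_, fun hj => ?_⟩
  · obtain ⟨hjT, p, hp, honly⟩ := mem_bas.1 hj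
    obtain ⟨u, hu, hup⟩ := mem_clos.1 (hTU hjT) p hp
    exact honly u (hUT hu) hup ▸ hu
  · obtain ⟨-, p, hp, honly⟩ := mem_bas.1 (hU.symm ▸ hj : j ∈ bas E U)
    obtain ⟨hc, hhead, hl⟩ := hp
    obtain ⟨rest, rfl⟩ : ∃ rest, p = some j :: rest := by
      cases p <;> simp_all
    have hrest : ¬ ∃ k ∈ T, some k ∈ rest := by
      intro hk
      obtain ⟨w, r, rfl⟩ := List.exists_cons_of_ne_nil (l := rest) (by rintro rfl; simp at hk)
      obtain ⟨m, hm, s, hs, hpath, -⟩ := exists_pathTo_suffix T hc.tail (by simpa using hl) hk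
      obtain ⟨u, hu, hus⟩ := mem_clos.1 (hTU hm) s hpath
      have hjs : some j ∈ s := honly u hu (List.mem_cons_of_mem _ (hs.subset hus)) ▸ hus
      exact hacyc _ (List.relationTransGen_of_isChain_cons_of_mem hc (hs.subset hjs))
    refine mem_bas.2 ⟨hUT hj, _, ⟨hc, hhead, hl⟩, fun k hk hkp => ?_⟩
    grind

theorem bas_eq_iff (hacyc : ∀ v : Vtx d, ¬ Relation.TransGen E v v) {U T : Finset (Fin d)}
    (hU : bas E U = U) : bas E T = U ↔ U ⊆ T ∧ T ⊆ clos E U := by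
  refine ⟨?_, fun h => bas_eq_of_subset_of_subset_clos hacyc hU h.1 h.2⟩
  rintro rfl
  exact ⟨bas_subset_s14 E T, subset_clos_bas E T⟩

theorem sum_bas_mul_eq_sum_irreducible {R : Type*} [CommSemiring R]
    (hacyc : ∀ v : Vtx d, ¬ Relation.TransGen E v v) (g f : Finset (Fin d) → R) :
    ∑ T ∈ univ.powerset, g (bas E T) * f T =
      ∑ U ∈ univ.powerset.filter (fun U => bas E U = U),
        g U * ∑ T ∈ (clos E U).powerset.filter (fun T => U ⊆ T), f T := by
  rw [← sum_fiberwise_of_maps_to (g := bas E) (t := univ.powerset.filter (fun U => bas E U = U))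
    (fun T _ => by simp [bas_bas])]
  refine sum_congr rfl fun U hU => ?_
  have hfiber : univ.powerset.filter (fun T => bas E T = U) =
      (clos E U).powerset.filter (fun T => U ⊆ T) := by
    ext T
    simp [bas_eq_iff hacyc (mem_filter.1 hU).2, and_comm]
  rw [mul_sum, ← hfiber]
  exact sum_congr rfl fun T hT => by rw [(mem_filter.1 hT).2]

end Graph

section Semivalue

variable {α R : Type*} [DecidableEq α] [CommRing R]

def semivalueWeight (q : ℕ → R) (i : α) (T : Finset α) : R :=
  (if i ∈ T then q (T.card - 1) else 0) - (if i ∉ T then q T.card else 0)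

theorem sum_powerset_erase_eq_sum_semivalueWeight {s : Finset α} {i : α} (hi : i ∈ s)
    (q : ℕ → R) (ν : Finset α → R) :
    ∑ S ∈ (s.erase i).powerset, q S.card * (ν (insert i S) - ν S) =
      ∑ T ∈ s.powerset, semivalueWeight q i T * ν T := by
  conv_rhs => rw [← insert_erase hi]
  rw [sum_powerset_insert (notMem_erase i s), ← sum_add_distrib]
  refine sum_congr rfl fun S hS => ?_
  have hiS : i ∉ S := fun h => notMem_erase i s (mem_powerset.1 hS h)
  simp only [semivalueWeight, hiS, mem_insert_self, card_insert_of_notMem hiS, if_true,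
    if_false, not_true_eq_false, not_false_eq_true, Nat.add_sub_cancel]
  ring

end Semivalue

theorem stmt14_general (d : ℕ) (E : Vtx d → Vtx d → Prop)
    (hacyc : ∀ v : Vtx d, ¬ Relation.TransGen E v v)
    (q : ℕ → ℝ)
    (ν : Finset (Fin d) → ℝ) (hν : ∀ T : Finset (Fin d), ν T = ν (bas E T))
    (i : Fin d) :
    (∑ S ∈ (Finset.univ.erase i).powerset, q S.card * (ν (insert i S) - ν S)) =
      ∑ U ∈ Finset.univ.powerset.filter (fun U : Finset (Fin d) => bas E U = U),
        ν U * ∑ T ∈ (clos E U).powerset.filter (fun T => U ⊆ T),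
          ((if i ∈ T then q (T.card - 1) else 0) -
           (if i ∉ T then q T.card else 0)) := by
  rw [sum_powerset_erase_eq_sum_semivalueWeight (mem_univ i)]
  calc ∑ T ∈ univ.powerset, semivalueWeight q i T * ν T
      = ∑ T ∈ univ.powerset, ν (bas E T) * semivalueWeight q i T :=
        sum_congr rfl fun T _ => by rw [hν T, mul_comm]
    _ = _ := sum_bas_mul_eq_sum_irreducible hacyc _ _

/-- Semivalues with arbitrary weights `q` decompose over irreducible sets whenever
`ν(T) = ν(⌊T⌋)`. -/
theorem stmt14 (d : ℕ) (E : Vtx d → Vtx d → Prop)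
    (hacyc : ∀ v : Vtx d, ¬ Relation.TransGen E v v)
    (hY : ∀ v : Vtx d, ¬ E none v)
    (q : ℕ → ℝ)
    (ν : Finset (Fin d) → ℝ) (hν : ∀ T : Finset (Fin d), ν T = ν (bas E T))
    (i : Fin d) :
    (∑ S ∈ (Finset.univ.erase i).powerset, q S.card * (ν (insert i S) - ν S)) =
      ∑ U ∈ Finset.univ.powerset.filter (fun U : Finset (Fin d) => bas E U = U),
        ν U * ∑ T ∈ (clos E U).powerset.filter (fun T => U ⊆ T),
          ((if i ∈ T then q (T.card - 1) else 0) -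
           (if i ∉ T then q T.card else 0)) :=
  stmt14_general d E hacyc q ν hν i
end
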